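/- Let K be a number field, let f, g : P^1 → P^1 be rational maps of degree d ≥ 2 defined over K, let α, β ∈ P^1(K), and suppose the pairs (f,α) and (g,β) are PGL_2(K̄)-conjugate, i.e. there exists φ ∈ PGL_2(K̄) with φ^{−1}∘g∘φ = f and φ(α) = β. Then dim_lower(G_{f,α}) = dim_lower(G_{g,β}) and dim_upper(G_{f,α}) = dim_upper(G_{g,β}). -/

import Mathlib

open scoped Classical

noncomputable section

/-! ### Minkowski dimension machinery for groups of automorphisms of rooted trees

A rooted tree is presented by its levels `V 0, V 1, V 2, …` (with `V 0` the root level)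
together with parent maps `V (n+1) → V n`.  An automorphism is a family of permutations
of the levels commuting with the parent maps; it is in particular determined by a point of
`∀ k, Equiv.Perm (V k)`.  The restriction `r_n σ` of `σ` to the height-`n` subtree is the
tuple `(σ 0, …, σ n)`, and the natural metric is
`d(σ,τ) = inf { d!^{-(dⁿ-1)/(d-1)} : r_n σ = r_n τ }`. -/

/-- The exponent `(dⁿ - 1)/(d - 1) = 1 + d + ⋯ + d^(n-1)`. -/
def scaleExp (d n : ℕ) : ℕ := ∑ i ∈ Finset.range n, d ^ i

/-- The scale `ε_n = d!^{-(dⁿ-1)/(d-1)}`, i.e. `1/|Aut(Tₙᶜᵒᵐ)|`. -/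
def treeScale (d n : ℕ) : ℝ := ((d.factorial : ℝ) ^ scaleExp d n)⁻¹

/-- Two families of level permutations restrict to the same automorphism of the
height-`n` subtree. -/
def AgreeUpTo {V : ℕ → Type*} (n : ℕ) (σ τ : ∀ k, Equiv.Perm (V k)) : Prop :=
  ∀ k, k ≤ n → σ k = τ k

/-- The natural metric on automorphisms of a rooted `d`-ary tree:
`d(σ,τ) = inf { d!^{-(dⁿ-1)/(d-1)} : σ and τ agree on the height-n subtree }`. -/
def treeDist {V : ℕ → Type*} (d : ℕ) (σ τ : ∀ k, Equiv.Perm (V k)) : ℝ :=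
  sInf {x : ℝ | ∃ n : ℕ, AgreeUpTo n σ τ ∧ x = treeScale d n}

/-- `N_{ε_n}(G)`: the least number of balls of radius `ε_n = treeScale d n` needed to
cover `G`. -/
def coverNum {V : ℕ → Type*} (d : ℕ) (G : Set (∀ k, Equiv.Perm (V k))) (n : ℕ) : ℕ :=
  sInf {m : ℕ | ∃ s : Finset (∀ k, Equiv.Perm (V k)), s.card = m ∧
    G ⊆ ⋃ σ ∈ s, {τ | treeDist d σ τ ≤ treeScale d n}}

/-- The lower Minkowski dimension `liminf_{ε → 0} log N_ε(G) / log (1/ε)` (computed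
along the scales `ε_n` of the metric). -/
def dimLower {V : ℕ → Type*} (d : ℕ) (G : Set (∀ k, Equiv.Perm (V k))) : ℝ :=
  Filter.liminf
    (fun n : ℕ => Real.log (coverNum d G n : ℝ) / Real.log (1 / treeScale d n)) Filter.atTop

/-- The upper Minkowski dimension `limsup_{ε → 0} log N_ε(G) / log (1/ε)` (computed
along the scales `ε_n` of the metric). -/
def dimUpper {V : ℕ → Type*} (d : ℕ) (G : Set (∀ k, Equiv.Perm (V k))) : ℝ :=
  Filter.limsup
    (fun n : ℕ => Real.log (coverNum d G n : ℝ) / Real.log (1 / treeScale d n)) Filter.atTop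

/-- The Minkowski dimension of `G` exists and equals `x`. -/
def HasDim {V : ℕ → Type*} (d : ℕ) (G : Set (∀ k, Equiv.Perm (V k))) (x : ℝ) : Prop :=
  dimLower d G = x ∧ dimUpper d G = x

/-- `G` is closed for the natural metric. -/
def IsDistClosed {V : ℕ → Type*} (d : ℕ) (G : Set (∀ k, Equiv.Perm (V k))) : Prop :=
  ∀ σ, (∀ ε : ℝ, 0 < ε → ∃ τ ∈ G, treeDist d σ τ ≤ ε) → σ ∈ G

/-- The closure of `G` for the natural metric. -/
def distClosure {V : ℕ → Type*} (d : ℕ) (G : Set (∀ k, Equiv.Perm (V k))) :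
    Set (∀ k, Equiv.Perm (V k)) :=
  {σ | ∀ ε : ℝ, 0 < ε → ∃ τ ∈ G, treeDist d σ τ ≤ ε}

/-- `|r_n(G)|`: the cardinality of the restriction of `G` to the height-`n` subtree. -/
def levelCard {V : ℕ → Type*} (G : Set (∀ k, Equiv.Perm (V k))) (n : ℕ) : ℕ :=
  Nat.card ((fun (σ : ∀ k, Equiv.Perm (V k)) (k : Fin (n + 1)) => σ k.1) '' G)

end
noncomputable section

/-- A fixed algebraic closure `K̄` of `K`. -/
abbrev Kbar (K : Type*) [Field K] : Type _ := AlgebraicClosure K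

/-- The level-`n` vertices of the preimage tree of `α` under `φ`: the set
`φ^{-n}(α)`. -/
abbrev preV {Pts : Type*} (φ : Pts → Pts) (α : Pts) (n : ℕ) : Type _ :=
  {β : Pts // φ^[n] β = α}

/-- The parent map of the preimage tree: a vertex `β ∈ φ^{-(n+1)}(α)` is joined to
`φ(β) ∈ φ^{-n}(α)`. -/
def preParent {Pts : Type*} (φ : Pts → Pts) (α : Pts) (n : ℕ)
    (β : preV φ α (n + 1)) : preV φ α n :=
  ⟨φ β.1, by have h := β.2; rwa [Function.iterate_succ_apply] at h⟩

/-- The image `G_{φ,α}` of the arboreal Galois representation attached to `(φ, α)` over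
the base field `L` (an intermediate field of `K̄/K`): the set of families of level
permutations of the preimage tree induced by elements of `Gal(K̄/L)`, acting on points
via `act`. -/
def arbGal {K : Type*} [Field K] {Pts : Type*}
    (act : (Kbar K ≃ₐ[K] Kbar K) → Pts → Pts) (L : IntermediateField K (Kbar K))
    (φ : Pts → Pts) (α : Pts) : Set (∀ n, Equiv.Perm (preV φ α n)) :=
  {g | ∃ σ : Kbar K ≃ₐ[K] Kbar K, (∀ x ∈ L, σ x = x) ∧
    ∀ (n : ℕ) (β : preV φ α n), (g n β : Pts) = act σ (β : Pts)}

end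
noncomputable section

/-- The projective line `ℙ¹(L) = L ∪ {∞}`, with `none` the point at infinity. -/
abbrev P1 (L : Type*) := Option L

/-- The action on `ℙ¹(A)` of the rational map `f = p/q` with coefficients in `K`,
for an extension field `A` of `K`.  At a finite point `x` the value is `p(x)/q(x)`
(`∞` when `q(x) = 0`), and the value at `∞` is governed by the degrees of `p` and
`q` and their leading coefficients. -/
def ratAct {K : Type*} [Field K] (p q : Polynomial K)
    (A : Type*) [Field A] [Algebra K A] : P1 A → P1 A
  | some x =>
      if Polynomial.aeval x q = 0 then none
      else some (Polynomial.aeval x p / Polynomial.aeval x q)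
  | none =>
      if q.natDegree < p.natDegree then none
      else if p.natDegree < q.natDegree then some 0
      else some (algebraMap K A (p.leadingCoeff / q.leadingCoeff))

/-- The natural action of `Gal(K̄/K)` on `ℙ¹(K̄)`. -/
def galP1 {K : Type*} [Field K] (σ : Kbar K ≃ₐ[K] Kbar K) : P1 (Kbar K) → P1 (Kbar K) :=
  Option.map σ

/-- The inclusion `ℙ¹(K) ⊆ ℙ¹(K̄)`. -/
def P1K {K : Type*} [Field K] : P1 K → P1 (Kbar K) :=
  Option.map (algebraMap K (Kbar K))

/-- The set of `L`-rational points of `ℙ¹(K̄)`, for an intermediate field `L` of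
`K̄/K`. -/
def P1Rat {K : Type*} [Field K] (L : IntermediateField K (Kbar K)) : Set (P1 (Kbar K)) :=
  {β | β = none ∨ ∃ x ∈ L, β = some x}

/-- The Möbius transformation of `ℙ¹(F)` attached to `(a b; c e) ∈ PGL₂(F)`. -/
def moebius {F : Type*} [Field F] (a b c e : F) : P1 F → P1 F
  | some x => if c * x + e = 0 then none else some ((a * x + b) / (c * x + e))
  | none => if c = 0 then none else some (a / c)

/-- The normalizing constant `C_D = log(D!)/(D-1)`. -/
def Cconst (D : ℕ) : ℝ := Real.log (D.factorial : ℝ) / ((D : ℝ) - 1)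

/-- The ramification multiplicity at a point `γ ∈ ℙ¹(A)` of the degree-`d` rational
map `f = p/q` with coefficients in `K ⊆ A`:  at a finite point `γ` with `f(γ) = c`
finite it is the order of vanishing of `p - c·q` at `γ`; the cases involving `∞` are
handled using `q` and degrees.  A point is critical when this is at least `2`. -/
def multAt {K : Type*} [Field K] (p q : Polynomial K)
    (A : Type*) [Field A] [Algebra K A] (d : ℕ) : P1 A → ℕ
  | some x =>
      match ratAct p q A (some x) with
      | some c => ((p.map (algebraMap K A)) -
          Polynomial.C c * (q.map (algebraMap K A))).rootMultiplicity x
      | none => (q.map (algebraMap K A)).rootMultiplicity x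
  | none =>
      match ratAct p q A none with
      | some c => d - ((p.map (algebraMap K A)) -
          Polynomial.C c * (q.map (algebraMap K A))).natDegree
      | none => d - q.natDegree

end

/-! Conjugation by the Möbius map `φ` identifies the preimage trees of `(f, α)` and `(g, β)`
level by level, equivariantly for `Gal(K̄/L)`, where `L = K(a, b, c, e)` is a field of definition
of `φ`. So the level-`n` images of `Gal(K̄/L)` in the two trees have the same size, and since
`Gal(K̄/L)` has finite index `[L : K]` in `Gal(K̄/K)`, the level-`n` images of the full Galois
group differ in size by a factor at most `[L : K]`. For the tree metric the covering number
`N_{ε_n}(G)` is exactly the size of the level-`n` image of `G`, so `log N_{ε_n}` moves by at most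
`log [L : K]`, which is negligible against `log (1/ε_n) → ∞`. -/

open Filter

section TreeMetric

variable {V : ℕ → Type*} {d : ℕ}

lemma scaleExp_strictMono (hd : 0 < d) : StrictMono (scaleExp d) :=
  strictMono_nat_of_lt_succ fun n => by
    simp only [scaleExp, Finset.sum_range_succ]
    exact Nat.lt_add_of_pos_right (pow_pos hd n)

lemma treeScale_strictAnti (hd : 2 ≤ d) : StrictAnti (treeScale d) := by
  have hfac : (1 : ℝ) < d.factorial := by exact_mod_cast Nat.one_lt_factorial.2 hd
  intro m n hmn
  exact inv_strictAnti₀ (by positivity)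
    (pow_lt_pow_right₀ hfac (scaleExp_strictMono (by omega) hmn))

lemma log_one_div_treeScale (d n : ℕ) :
    Real.log (1 / treeScale d n) = scaleExp d n * Real.log d.factorial := by
  rw [treeScale, one_div, inv_inv, Real.log_pow]

lemma tendsto_log_one_div_treeScale (hd : 2 ≤ d) :
    Tendsto (fun n => Real.log (1 / treeScale d n)) atTop atTop := by
  simp only [log_one_div_treeScale]
  have hlog : 0 < Real.log d.factorial :=
    Real.log_pos (by exact_mod_cast Nat.one_lt_factorial.2 hd)
  exact (tendsto_natCast_atTop_atTop.comp
    (scaleExp_strictMono (by omega)).tendsto_atTop).atTop_mul_const hlog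

lemma agreeUpTo_iff {n : ℕ} {σ τ : ∀ k, Equiv.Perm (V k)} :
    AgreeUpTo n σ τ ↔ (fun k : Fin (n + 1) => σ k) = (fun k : Fin (n + 1) => τ k) := by
  refine ⟨fun h => funext fun k => h k (Nat.lt_succ_iff.1 k.2), fun h k hk => ?_⟩
  exact congrFun h ⟨k, Nat.lt_succ_iff.2 hk⟩

lemma treeDist_le_treeScale_iff (hd : 2 ≤ d) [Subsingleton (V 0)] {n : ℕ}
    {σ τ : ∀ k, Equiv.Perm (V k)} : treeDist d σ τ ≤ treeScale d n ↔ AgreeUpTo n σ τ := by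
  have h0 : AgreeUpTo 0 σ τ := fun k hk => by
    obtain rfl : k = 0 := Nat.le_zero.1 hk
    exact Subsingleton.elim _ _
  refine ⟨fun h => ?_, fun h => csInf_le ⟨0, ?_⟩ ⟨n, h, rfl⟩⟩
  · by_contra hn
    have hpos : n ≠ 0 := by rintro rfl; exact hn h0
    -- every level at which `σ` and `τ` agree lies below `n`, so their distance is at least `ε_{n-1}`
    have hle : treeScale d (n - 1) ≤ treeDist d σ τ := by
      refine le_csInf ⟨_, 0, h0, rfl⟩ ?_
      rintro _ ⟨m, hm, rfl⟩
      refine (treeScale_strictAnti hd).antitone (Nat.le_sub_one_of_lt ?_)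
      by_contra! hnm
      exact hn fun k hk => hm k (hk.trans hnm)
    linarith [treeScale_strictAnti hd (Nat.sub_one_lt hpos)]
  · rintro _ ⟨m, -, rfl⟩
    exact (inv_pos.2 (by positivity)).le

end TreeMetric

lemma sInf_card_cover_by_fibers {X Y : Type*} (r : X → Y) (G : Set X) :
    sInf {m | ∃ s : Finset X, s.card = m ∧ G ⊆ ⋃ x ∈ s, {y | r x = r y}} = Nat.card (r '' G) := by
  classical
  have hcover : ∀ s : Finset X, G ⊆ ⋃ x ∈ s, {y | r x = r y} → r '' G ⊆ s.image r := by
    rintro s hs _ ⟨y, hy, rfl⟩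
    obtain ⟨x, hx, hxy⟩ := Set.mem_iUnion₂.1 (hs hy)
    exact Finset.mem_coe.2 (Finset.mem_image.2 ⟨x, hx, hxy⟩)
  rcases (r '' G).finite_or_infinite with hfin | hinf
  · -- one point of `G` over each point of `r '' G` is an optimal cover
    obtain ⟨S, -, hS⟩ := Set.exists_subset_bijOn G r
    have hSfin : S.Finite := hS.finite_iff_finite.2 hfin
    have hs : G ⊆ ⋃ x ∈ hSfin.toFinset, {y | r x = r y} := fun y hy => by
      obtain ⟨x, hx, hxy⟩ := hS.image_eq.symm ▸ Set.mem_image_of_mem r hy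
      exact Set.mem_iUnion₂.2 ⟨x, hSfin.mem_toFinset.2 hx, hxy⟩
    refine le_antisymm ?_ (le_csInf ⟨_, _, rfl, hs⟩ ?_)
    · refine le_of_le_of_eq (Nat.sInf_le ⟨_, rfl, hs⟩) ?_
      rw [← Set.ncard_eq_toFinset_card S hSfin, hS.ncard_eq, Nat.card_coe_set_eq]
    · rintro _ ⟨t, rfl, ht⟩
      calc Nat.card (r '' G) ≤ (t.image r).card := by
            rw [← Set.ncard_coe_finset, Nat.card_coe_set_eq]
            exact Set.ncard_le_ncard (hcover t ht) (Finset.finite_toSet _)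
        _ ≤ t.card := Finset.card_image_le
  · have : {m | ∃ s : Finset X, s.card = m ∧ G ⊆ ⋃ x ∈ s, {y | r x = r y}} = ∅ :=
      Set.eq_empty_of_forall_notMem fun _ ⟨s, _, hs⟩ =>
        hinf ((s.image r).finite_toSet.subset (hcover s hs))
    rw [this, Nat.sInf_empty, Set.Infinite.card_eq_zero hinf]

lemma coverNum_eq_levelCard {V : ℕ → Type*} {d : ℕ} (hd : 2 ≤ d) [Subsingleton (V 0)]
    (G : Set (∀ k, Equiv.Perm (V k))) (n : ℕ) : coverNum d G n = levelCard G n := by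
  simp only [coverNum, treeDist_le_treeScale_iff hd, agreeUpTo_iff]
  exact sInf_card_cover_by_fibers _ G

lemma Real.sSup_le_sSup_of_forall_sub_mem {S T : Set ℝ} (hS : S.Nonempty) (hT : BddAbove T)
    (hST : ∀ ε > 0, ∀ a ∈ S, a - ε ∈ T) : sSup S ≤ sSup T :=
  csSup_le hS fun a ha => le_of_forall_pos_le_add fun ε hε => by
    linarith [le_csSup hT (hST ε hε a ha)]

lemma Real.sSup_eq_of_forall_sub_mem {S T : Set ℝ} (hST : ∀ ε > 0, ∀ a ∈ S, a - ε ∈ T)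
    (hTS : ∀ ε > 0, ∀ a ∈ T, a - ε ∈ S) : sSup S = sSup T := by
  have transfer : ∀ {S T : Set ℝ}, (∀ ε > 0, ∀ a ∈ S, a - ε ∈ T) → (∀ ε > 0, ∀ a ∈ T, a - ε ∈ S) →
      S.Nonempty ∧ BddAbove S → T.Nonempty ∧ BddAbove T := by
    rintro S T hST hTS ⟨⟨a, ha⟩, M, hM⟩
    exact ⟨⟨_, hST 1 one_pos a ha⟩, M + 1, fun b hb => by linarith [hM (hTS 1 one_pos b hb)]⟩
  by_cases h : S.Nonempty ∧ BddAbove S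
  · have h' := transfer hST hTS h
    exact le_antisymm (Real.sSup_le_sSup_of_forall_sub_mem h.1 h'.2 hST)
      (Real.sSup_le_sSup_of_forall_sub_mem h'.1 h.2 hTS)
  · have h' : ¬ (T.Nonempty ∧ BddAbove T) := mt (transfer hTS hST) h
    rw [Real.sSup_def, Real.sSup_def, dif_neg h, dif_neg h']

lemma Real.liminf_eq_of_tendsto_sub {ι : Type*} {l : Filter ι} {u v : ι → ℝ}
    (h : Tendsto (u - v) l (nhds 0)) : liminf u l = liminf v l := by
  have shift : ∀ {u v : ι → ℝ}, Tendsto (u - v) l (nhds 0) →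
      ∀ ε > 0, ∀ a ∈ {a | ∀ᶠ n in l, a ≤ u n}, a - ε ∈ {a | ∀ᶠ n in l, a ≤ v n} := by
    intro u v h ε hε a ha
    filter_upwards [ha, (tendsto_order.1 h).2 ε hε] with n hau huv
    simp only [Pi.sub_apply] at huv
    linarith
  have h' : Tendsto (v - u) l (nhds 0) := by
    rw [← neg_sub, ← neg_zero]
    exact h.neg
  exact Real.sSup_eq_of_forall_sub_mem (shift h) (shift h')

lemma Real.limsup_eq_neg_liminf_neg {ι : Type*} {l : Filter ι} (u : ι → ℝ) :
    limsup u l = -liminf (-u) l := by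
  rw [limsup_eq, liminf_eq, Real.sInf_def]
  congr 2
  ext a
  simp only [Set.mem_neg, Set.mem_ofPred_eq, Pi.neg_apply, le_neg]

lemma Real.limsup_eq_of_tendsto_sub {ι : Type*} {l : Filter ι} {u v : ι → ℝ}
    (h : Tendsto (u - v) l (nhds 0)) : limsup u l = limsup v l := by
  have h' : Tendsto (-u - -v) l (nhds 0) := by
    rw [neg_sub_neg, ← neg_sub, ← neg_zero]
    exact h.neg
  rw [Real.limsup_eq_neg_liminf_neg, Real.limsup_eq_neg_liminf_neg,
    Real.liminf_eq_of_tendsto_sub h']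

lemma abs_log_sub_log_le_log_of_le_mul {a b m : ℕ} (hab : a ≤ m * b) (hba : b ≤ m * a) :
    |Real.log a - Real.log b| ≤ Real.log m := by
  rcases Nat.eq_zero_or_pos a with rfl | ha
  · obtain rfl : b = 0 := by simpa using hba
    simpa using Real.log_natCast_nonneg m
  have hb : 0 < b := Nat.pos_of_ne_zero fun hb => by subst hb; omega
  have hm : 0 < m := Nat.pos_of_ne_zero fun hm => by subst hm; omega
  have key : ∀ {x y : ℕ}, 0 < x → 0 < y → x ≤ m * y → Real.log x - Real.log y ≤ Real.log m :=
    fun {x y} hx hy hxy => by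
      have := Real.log_le_log (by exact_mod_cast hx) (by exact_mod_cast hxy : (x : ℝ) ≤ m * y)
      rw [Real.log_mul (by positivity) (by positivity)] at this
      linarith
  exact abs_sub_le_iff.2 ⟨key ha hb hab, key hb ha hba⟩

lemma dimLower_eq_and_dimUpper_eq_of_coverNum_le_mul {V W : ℕ → Type*} {d : ℕ} (hd : 2 ≤ d)
    {A : Set (∀ k, Equiv.Perm (V k))} {B : Set (∀ k, Equiv.Perm (W k))} (m : ℕ)
    (hAB : ∀ n, coverNum d A n ≤ m * coverNum d B n)
    (hBA : ∀ n, coverNum d B n ≤ m * coverNum d A n) :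
    dimLower d A = dimLower d B ∧ dimUpper d A = dimUpper d B := by
  set D := fun n => Real.log (1 / treeScale d n)
  have hD := tendsto_log_one_div_treeScale hd
  have hdiff : Tendsto ((fun n => Real.log (coverNum d A n) / D n) -
      fun n => Real.log (coverNum d B n) / D n) atTop (nhds 0) := by
    refine squeeze_zero_norm' ?_ ((tendsto_const_nhds (x := Real.log m)).div_atTop hD)
    filter_upwards [hD.eventually_gt_atTop 0] with n hn
    rw [Pi.sub_apply, ← sub_div, norm_div, Real.norm_of_nonneg hn.le, Real.norm_eq_abs]
    exact div_le_div_of_nonneg_right (abs_log_sub_log_le_log_of_le_mul (hAB n) (hBA n)) hn.le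
  exact ⟨Real.liminf_eq_of_tendsto_sub hdiff, Real.limsup_eq_of_tendsto_sub hdiff⟩

section
variable {G Q Q' : Type*} [Group G] [Group Q] [Group Q']

lemma Subgroup.card_map_mul_index_eq_card_range (ρ : G →* Q) (H : Subgroup G) :
    Nat.card (H.map ρ) * (H.map ρ.rangeRestrict).index = Nat.card ρ.range := by
  rw [← Subgroup.card_mul_index (H.map ρ.rangeRestrict), ← Subgroup.card_map_of_injective
    ρ.range.subtype_injective, Subgroup.map_map, MonoidHom.subtype_comp_rangeRestrict]

lemma Subgroup.card_map_le_card_range (ρ : G →* Q) (H : Subgroup G) [H.FiniteIndex] :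
    Nat.card (H.map ρ) ≤ Nat.card ρ.range := by
  rw [← Subgroup.card_map_mul_index_eq_card_range]
  exact Nat.le_mul_of_pos_right _ (Nat.pos_of_ne_zero
    (ne_zero_of_dvd_ne_zero H.index_ne_zero_of_finite (H.index_map_dvd ρ.rangeRestrict_surjective)))

lemma Subgroup.card_range_le_index_mul_card_map (ρ : G →* Q) (H : Subgroup G) [H.FiniteIndex] :
    Nat.card ρ.range ≤ H.index * Nat.card (H.map ρ) := by
  rw [← Subgroup.card_map_mul_index_eq_card_range, mul_comm]
  exact Nat.mul_le_mul_right _ (Nat.le_of_dvd (Nat.pos_of_ne_zero H.index_ne_zero_of_finite)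
    (H.index_map_dvd ρ.rangeRestrict_surjective))

lemma Subgroup.card_range_le_index_mul_card_range_of_card_map_eq {ρ : G →* Q} {ρ' : G →* Q'}
    (H : Subgroup G) [H.FiniteIndex] (h : Nat.card (H.map ρ) = Nat.card (H.map ρ')) :
    Nat.card ρ.range ≤ H.index * Nat.card ρ'.range :=
  calc Nat.card ρ.range ≤ H.index * Nat.card (H.map ρ) := H.card_range_le_index_mul_card_map ρ
    _ ≤ H.index * Nat.card ρ'.range := by
      rw [h]
      exact Nat.mul_le_mul_left _ (H.card_map_le_card_range ρ')

end

section PreimageTree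

variable {G X Y : Type*} [Group G] [MulAction G X] [MulAction G Y]
  {f : X → X} {α : X} {g : Y → Y} {β : Y}

def levelPerm (hf : ∀ (σ : G) x, f (σ • x) = σ • f x) (hα : ∀ σ : G, σ • α = α) (n : ℕ) :
    G →* Equiv.Perm (preV f α n) where
  toFun σ := (MulAction.toPerm σ).subtypePerm fun x => by
    have hit : f^[n] (σ • x) = σ • f^[n] x :=
      (Function.Commute.iterate_left (f := f) (g := (σ • ·)) (hf σ) n) x
    rw [MulAction.toPerm_apply, hit, ← hα σ, smul_left_cancel_iff, hα]
  map_one' := by ext x; exact one_smul G (x : X)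
  map_mul' σ τ := by ext x; exact mul_smul σ τ (x : X)

lemma levelPerm_apply_coe (hf : ∀ (σ : G) x, f (σ • x) = σ • f x) (hα : ∀ σ : G, σ • α = α)
    (n : ℕ) (σ : G) (x : preV f α n) : (levelPerm hf hα n σ x : X) = σ • (x : X) :=
  rfl

def levelsHom (hf : ∀ (σ : G) x, f (σ • x) = σ • f x) (hα : ∀ σ : G, σ • α = α) (n : ℕ) :
    G →* ((k : Fin (n + 1)) → Equiv.Perm (preV f α k)) :=
  MonoidHom.pi fun k => levelPerm hf hα k

lemma card_map_levelsHom_eq_of_semiconj (hf : ∀ (σ : G) x, f (σ • x) = σ • f x)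
    (hα : ∀ σ : G, σ • α = α) (hg : ∀ (σ : G) y, g (σ • y) = σ • g y) (hβ : ∀ σ : G, σ • β = β)
    (Φ : X ≃ Y) (hΦ : ∀ x, Φ (f x) = g (Φ x)) (hΦα : Φ α = β) (H : Subgroup G)
    (hΦH : ∀ σ ∈ H, ∀ x, Φ (σ • x) = σ • Φ x) (n : ℕ) :
    Nat.card (H.map (levelsHom hf hα n)) = Nat.card (H.map (levelsHom hg hβ n)) := by
  have hit : ∀ k x, Φ (f^[k] x) = g^[k] (Φ x) :=
    fun k => Function.Semiconj.iterate_right hΦ k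
  let e : ∀ k, preV f α k ≃ preV g β k := fun k =>
    Φ.subtypeEquiv fun x => by rw [← hit, ← hΦα, Φ.apply_eq_iff_eq]
  let conj : ((k : Fin (n + 1)) → Equiv.Perm (preV f α k)) ≃*
      ((k : Fin (n + 1)) → Equiv.Perm (preV g β k)) :=
    MulEquiv.piCongrRight fun k => (e k).permCongrHom
  have hconj : ∀ σ ∈ H, conj (levelsHom hf hα n σ) = levelsHom hg hβ n σ := by
    intro σ hσ
    funext k
    ext y
    simp [conj, e, levelsHom, levelPerm_apply_coe, hΦH σ hσ]
  simp only [← SetLike.coe_sort_coe, Subgroup.coe_map]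
  rw [← Set.image_congr hconj, ← Set.image_image conj, Nat.card_image_of_injective conj.injective]

end PreimageTree

instance {Pts : Type*} (φ : Pts → Pts) (α : Pts) : Subsingleton (preV φ α 0) :=
  ⟨fun x y => Subtype.ext (x.2.trans y.2.symm)⟩

section ProjectiveLine

variable {K A : Type*} [Field K] [Field A] [Algebra K A]

lemma ratAct_smul (p q : Polynomial K) (σ : A ≃ₐ[K] A) (x : P1 A) :
    ratAct p q A (σ • x) = σ • ratAct p q A x := by
  cases x with
  | none => simp only [ratAct, Option.smul_none]; split_ifs <;> simp
  | some x =>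
    have hq : Polynomial.aeval (σ x) q = σ (Polynomial.aeval x q) :=
      Polynomial.aeval_algHom_apply σ.toAlgHom x q
    have hp : Polynomial.aeval (σ x) p = σ (Polynomial.aeval x p) :=
      Polynomial.aeval_algHom_apply σ.toAlgHom x p
    simp only [Option.smul_some, AlgEquiv.smul_def, ratAct, hp, hq, map_eq_zero_iff _ σ.injective]
    split_ifs <;> simp [map_div₀]

lemma moebius_smul {a b c e : A} (σ : A ≃ₐ[K] A) (ha : σ a = a) (hb : σ b = b) (hc : σ c = c)
    (he : σ e = e) (x : P1 A) : moebius a b c e (σ • x) = σ • moebius a b c e x := by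
  cases x with
  | none => by_cases h : c = 0 <;> simp [moebius, h, ha, hc]
  | some x =>
    have hden : c * σ x + e = σ (c * x + e) := by simp [hc, he]
    simp only [Option.smul_some, AlgEquiv.smul_def, moebius, hden, map_eq_zero_iff _ σ.injective]
    split_ifs <;> simp [ha, hb]

end ProjectiveLine

lemma smul_P1K {K : Type*} [Field K] (σ : Kbar K ≃ₐ[K] Kbar K) (α : P1 K) :
    σ • P1K α = P1K α := by
  cases α <;> simp [P1K]

section Moebius

variable {F : Type*} [Field F] {a b c e : F}

lemma moebius_adjugate_moebius (hdet : a * e - b * c ≠ 0) (x : P1 F) :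
    moebius e (-b) (-c) a (moebius a b c e x) = x := by
  cases x with
  | none =>
    by_cases hc : c = 0
    · simp [moebius, hc]
    · have h0 : -(c * (a / c)) + a = 0 := by field_simp; ring
      simp [moebius, hc, h0]
  | some x =>
    by_cases hx : c * x + e = 0
    · have hc : c ≠ 0 := by rintro rfl; exact hdet (by simp_all)
      simp only [moebius, if_pos hx, neg_eq_zero, if_neg hc, Option.some.injEq]
      field_simp
      linear_combination -hx
    · have hy : -c * ((a * x + b) / (c * x + e)) + a = (a * e - b * c) / (c * x + e) := by
        field_simp; ring
      have hz : e * ((a * x + b) / (c * x + e)) + -b = (a * e - b * c) * x / (c * x + e) := by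
        rw [← mul_div_assoc, div_add' _ _ _ hx]; ring
      simp only [moebius, hy, hz, div_eq_zero_iff, hdet, hx, or_self, if_false,
        Option.some.injEq]
      field_simp

noncomputable def moebiusEquiv (hdet : a * e - b * c ≠ 0) : P1 F ≃ P1 F where
  toFun := moebius a b c e
  invFun := moebius e (-b) (-c) a
  left_inv := moebius_adjugate_moebius hdet
  right_inv x := by
    simpa using moebius_adjugate_moebius (a := e) (b := -b) (c := -c) (e := a)
      (fun h => hdet (by linear_combination h)) x

end Moebius

lemma levelCard_arbGal_bot {K : Type*} [Field K] {f : P1 (Kbar K) → P1 (Kbar K)}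
    {α : P1 (Kbar K)} (hf : ∀ (σ : Kbar K ≃ₐ[K] Kbar K) x, f (σ • x) = σ • f x)
    (hα : ∀ σ : Kbar K ≃ₐ[K] Kbar K, σ • α = α) (n : ℕ) :
    levelCard (arbGal (K := K) galP1 ⊥ f α) n = Nat.card (levelsHom hf hα n).range := by
  rw [levelCard, ← SetLike.coe_sort_coe, MonoidHom.coe_range]
  congr! 2
  ext t
  constructor
  · rintro ⟨γ, ⟨σ, -, hσ⟩, rfl⟩
    exact ⟨σ, funext fun k => Equiv.ext fun x => Subtype.ext (hσ k x).symm⟩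
  · rintro ⟨σ, rfl⟩
    refine ⟨fun k => levelPerm hf hα k σ, ⟨σ, fun x hx => ?_, fun _ _ => rfl⟩, rfl⟩
    obtain ⟨y, rfl⟩ := IntermediateField.mem_bot.1 hx
    exact σ.commutes y

lemma IntermediateField.finiteIndex_fixingSubgroup {F E : Type*} [Field F] [Field E]
    [Algebra F E] [IsGalois F E] (L : IntermediateField F E) [FiniteDimensional F L] :
    L.fixingSubgroup.FiniteIndex :=
  ⟨by rw [← IntermediateField.finrank_eq_fixingSubgroup_index]; exact Module.finrank_pos.ne'⟩

theorem arboreal_conjugacy_invariance_general {K : Type*} [Field K] [NumberField K] {d : ℕ}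
    (hd : 2 ≤ d) (p q r s : Polynomial K)
    (α β : P1 K) (a b c e : Kbar K) (hdet : a * e - b * c ≠ 0)
    (hconj : ∀ x : P1 (Kbar K),
      moebius a b c e (ratAct p q (Kbar K) x) = ratAct r s (Kbar K) (moebius a b c e x))
    (hpt : moebius a b c e (P1K α) = P1K β) :
    dimLower d (arbGal (K := K) galP1 ⊥ (ratAct p q (Kbar K)) (P1K α)) =
        dimLower d (arbGal (K := K) galP1 ⊥ (ratAct r s (Kbar K)) (P1K β)) ∧
      dimUpper d (arbGal (K := K) galP1 ⊥ (ratAct p q (Kbar K)) (P1K α)) =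
        dimUpper d (arbGal (K := K) galP1 ⊥ (ratAct r s (Kbar K)) (P1K β)) := by
  have hf := ratAct_smul (A := Kbar K) p q
  have hg := ratAct_smul (A := Kbar K) r s
  have hα := fun σ => smul_P1K σ α
  have hβ := fun σ => smul_P1K σ β
  set L := IntermediateField.adjoin K ({a, b, c, e} : Set (Kbar K))
  have : FiniteDimensional K L :=
    IntermediateField.finiteDimensional_adjoin fun x _ => Algebra.IsIntegral.isIntegral x
  have := L.finiteIndex_fixingSubgroup
  have hfix : ∀ σ ∈ L.fixingSubgroup, ∀ x ∈ ({a, b, c, e} : Set (Kbar K)), σ x = x :=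
    fun σ hσ x hx => (IntermediateField.mem_fixingSubgroup_iff L σ).1 hσ x
      (IntermediateField.subset_adjoin K _ hx)
  have hΦL : ∀ σ ∈ L.fixingSubgroup, ∀ x, moebiusEquiv hdet (σ • x) = σ • moebiusEquiv hdet x :=
    fun σ hσ => moebius_smul σ (hfix σ hσ a (by simp)) (hfix σ hσ b (by simp))
      (hfix σ hσ c (by simp)) (hfix σ hσ e (by simp))
  have hcard := card_map_levelsHom_eq_of_semiconj hf hα hg hβ (moebiusEquiv hdet) hconj hpt _ hΦL
  have hN : ∀ {f : P1 (Kbar K) → P1 (Kbar K)} {γ} hf hγ n,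
      coverNum d (arbGal (K := K) galP1 ⊥ f γ) n = Nat.card (levelsHom hf hγ n).range :=
    fun hf hγ n => by rw [coverNum_eq_levelCard hd, levelCard_arbGal_bot hf hγ]
  refine dimLower_eq_and_dimUpper_eq_of_coverNum_le_mul hd L.fixingSubgroup.index
    (fun n => ?_) (fun n => ?_) <;> rw [hN hf hα, hN hg hβ]
  exacts [Subgroup.card_range_le_index_mul_card_range_of_card_map_eq _ (hcard n),
    Subgroup.card_range_le_index_mul_card_range_of_card_map_eq _ (hcard n).symm]

theorem arboreal_conjugacy_invariance {K : Type*} [Field K] [NumberField K] {d : ℕ}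
    (hd : 2 ≤ d) (p q r s : Polynomial K) (hf : IsCoprime p q) (hg : IsCoprime r s)
    (hdf : max p.natDegree q.natDegree = d) (hdg : max r.natDegree s.natDegree = d)
    (α β : P1 K) (a b c e : Kbar K) (hdet : a * e - b * c ≠ 0)
    (hconj : ∀ x : P1 (Kbar K),
      moebius a b c e (ratAct p q (Kbar K) x) = ratAct r s (Kbar K) (moebius a b c e x))
    (hpt : moebius a b c e (P1K α) = P1K β) :
    dimLower d (arbGal (K := K) galP1 ⊥ (ratAct p q (Kbar K)) (P1K α)) =
        dimLower d (arbGal (K := K) galP1 ⊥ (ratAct r s (Kbar K)) (P1K β)) ∧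
      dimUpper d (arbGal (K := K) galP1 ⊥ (ratAct p q (Kbar K)) (P1K α)) =
        dimUpper d (arbGal (K := K) galP1 ⊥ (ratAct r s (Kbar K)) (P1K β)) :=
  arboreal_conjugacy_invariance_general hd p q r s α β a b c e hdet hconj hpt
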